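/- arXiv:1310.5363 — 3 statements merged into one kernel-verified Lean document; each statement's English description precedes it below -/
import Mathlib

section
/- For every integer n ≥ 2, f(n) ≥ 2^(2^(n-2)). In particular f(n) ≥ 2 for n ≥ 2. -/
/-- An equation from `E_n`: `x_k = 1`, `x_i + x_j = x_k`, or `x_i * x_j = x_k`. -/
inductive Eqn (n : ℕ) : Type where
  | one (k : Fin n)
  | add (i j k : Fin n)
  | mul (i j k : Fin n)

def Eqn.holds {n : ℕ} (x : Fin n → ℕ) : Eqn n → Prop
  | .one k => x k = 1
  | .add i j k => x i + x j = x k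
  | .mul i j k => x i * x j = x k

/-- `x` solves the system `S ⊆ E_n`. -/
def Solves {n : ℕ} (x : Fin n → ℕ) (S : Set (Eqn n)) : Prop :=
  ∀ e ∈ S, e.holds x

/-- Every solvable system `S ⊆ E_n` has a solution with all values `≤ b`. -/
def IsBound (n b : ℕ) : Prop :=
  ∀ S : Set (Eqn n), (∃ x, Solves x S) → ∃ x, Solves x S ∧ ∀ i, x i ≤ b

/-- `f n` is the smallest such bound. -/
noncomputable def f (n : ℕ) : ℕ := sInf {b | IsBound n b}

/-- `y` is a duplicate of `x`. -/
def Dup {n : ℕ} (x y : Fin n → ℕ) : Prop :=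
  (∀ k, x k = 1 → y k = 1) ∧
  (∀ i j k, x i + x j = x k → y i + y j = y k) ∧
  (∀ i j k, x i * x j = x k → y i * y j = y k)

/-- Every `x : ℕⁿ` has a duplicate in `{0,…,b}ⁿ`. -/
def DupBound (n b : ℕ) : Prop :=
  ∀ x : Fin n → ℕ, ∃ y, Dup x y ∧ ∀ i, y i ≤ b

/-- `f` expressed via duplicates. -/
noncomputable def fdup (n : ℕ) : ℕ := sInf {b | DupBound n b}

/-- `g n m` : smallest `b` such that every `x ∈ {0,…,m-1}ⁿ` has a duplicate in `{0,…,b}ⁿ`. -/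
noncomputable def g (n m : ℕ) : ℕ :=
  sInf {b | ∀ x : Fin n → ℕ, (∀ i, x i < m) → ∃ y, Dup x y ∧ ∀ i, y i ≤ b}

/-! The system `x₀ = 1, x₀ + x₀ = x₁, xᵢ · xᵢ = xᵢ₊₁ (1 ≤ i)` has exactly one solution,
`x₀ = 1, xᵢ₊₁ = 2 ^ 2 ^ i`, so any bound `b` must be at least `x_{n-1} = 2 ^ 2 ^ (n - 2)`.
That some bound exists at all (so that `f n` is not the junk value `sInf ∅ = 0`) holds because
`E_n` is finite: pick one solution of each of the finitely many solvable systems. -/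

instance (n : ℕ) : Finite (Eqn n) :=
  Finite.of_injective
    (fun e : Eqn n =>
      match e with
      | .one k => ((0 : Fin 3), k, k, k)
      | .add i j k => ((1 : Fin 3), i, j, k)
      | .mul i j k => ((2 : Fin 3), i, j, k))
    (by rintro (a | ⟨a, b, c⟩ | ⟨a, b, c⟩) (d | ⟨d, e, f⟩ | ⟨d, e, f⟩) h <;> simp_all)

theorem exists_isBound (n : ℕ) : ∃ b, IsBound n b := by
  classical
  let bound : Set (Eqn n) → ℕ := fun S =>
    if h : ∃ x, Solves x S then Finset.univ.sup h.choose else 0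
  obtain ⟨b, hb⟩ := (Set.finite_range bound).bddAbove
  refine ⟨b, fun S hS => ⟨hS.choose, hS.choose_spec, fun i => ?_⟩⟩
  calc hS.choose i ≤ bound S := by
        simp only [bound, dif_pos hS]
        exact Finset.le_sup (Finset.mem_univ i)
    _ ≤ b := hb (Set.mem_range_self S)

theorem le_f_of_forall_solves {n c : ℕ} {S : Set (Eqn n)} (i : Fin n) (hS : ∃ x, Solves x S)
    (hc : ∀ x, Solves x S → c ≤ x i) : c ≤ f n := by
  obtain ⟨b₀, hb₀⟩ := exists_isBound n
  refine le_csInf ⟨b₀, hb₀⟩ fun b hb => ?_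
  obtain ⟨y, hy, hyb⟩ := hb S hS
  exact (hc y hy).trans (hyb i)

def squaringSystem (n : ℕ) : Set (Eqn n) :=
  {e | match e with
    | .one k => k.val = 0
    | .add i j k => i.val = 0 ∧ j.val = 0 ∧ k.val = 1
    | .mul i j k => 1 ≤ i.val ∧ j = i ∧ k.val = i.val + 1}

def squaringSeq : ℕ → ℕ
  | 0 => 1
  | i + 1 => 2 ^ 2 ^ i

theorem squaringSeq_succ_succ (i : ℕ) :
    squaringSeq (i + 2) = squaringSeq (i + 1) * squaringSeq (i + 1) := by
  simp only [squaringSeq, ← pow_add, pow_succ, mul_two]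

theorem solves_squaringSystem (n : ℕ) :
    Solves (fun i : Fin n => squaringSeq i) (squaringSystem n) := by
  rintro (k | ⟨i, j, k⟩ | ⟨⟨i, hi⟩, j, ⟨k, hk⟩⟩) he <;>
    simp only [squaringSystem, Set.mem_ofPred_eq] at he
  · simp [Eqn.holds, he, squaringSeq]
  · simp [Eqn.holds, he, squaringSeq]
  · obtain ⟨hi1, rfl, rfl⟩ := he
    obtain ⟨i, rfl⟩ := Nat.exists_eq_add_of_le' hi1
    exact (squaringSeq_succ_succ i).symm

theorem eq_squaringSeq_of_solves {n : ℕ} {x : Fin n → ℕ} (hx : Solves x (squaringSystem n))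
    (i : ℕ) (hi : i < n) : x ⟨i, hi⟩ = squaringSeq i := by
  induction i using Nat.strong_induction_on with
  | _ i ih =>
    match i, hi with
    | 0, hi => exact hx (.one ⟨0, hi⟩) rfl
    | 1, hi =>
      have hadd := hx (.add ⟨0, by omega⟩ ⟨0, by omega⟩ ⟨1, hi⟩) ⟨rfl, rfl, rfl⟩
      simp only [Eqn.holds, ih 0 one_pos (by omega)] at hadd
      exact hadd.symm
    | i + 2, hi =>
      have hmul := hx (.mul ⟨i + 1, by omega⟩ ⟨i + 1, by omega⟩ ⟨i + 2, hi⟩) ⟨by simp, rfl, rfl⟩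
      simp only [Eqn.holds, ih (i + 1) (by omega) (by omega)] at hmul
      rw [← hmul, squaringSeq_succ_succ]

theorem stmt2 (n : ℕ) (hn : 2 ≤ n) :
    2 ^ (2 ^ (n - 2)) ≤ f n ∧ 2 ≤ f n := by
  have hlast : n - 2 + 1 < n := by omega
  have hlower : 2 ^ (2 ^ (n - 2)) ≤ f n :=
    le_f_of_forall_solves ⟨n - 2 + 1, hlast⟩ ⟨_, solves_squaringSystem n⟩ fun x hx =>
      (eq_squaringSeq_of_solves hx _ hlast).ge
  refine ⟨hlower, le_trans ?_ hlower⟩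
  calc 2 = 2 ^ 1 := (pow_one 2).symm
    _ ≤ 2 ^ 2 ^ (n - 2) := Nat.pow_le_pow_right two_pos Nat.one_le_two_pow
end

section
/- With f and g as defined, for every positive integer n: g(n, f(n)) < f(n), and g(n, m) = f(n) for all m ≥ f(n) + 1. -/
/-!
Every `x ∈ ℕⁿ` is a duplicate of itself, so tuples in `{0,…,m-1}ⁿ` never need values above
`m - 1`; with `m = f(n) ≥ 1` this gives `g(n, f(n)) < f(n)`. For `m > f(n)`, clearly
`g(n, m) ≤ f(n)`; conversely, any `x ∈ ℕⁿ` has a duplicate in `{0,…,f(n)}ⁿ ⊆ {0,…,m-1}ⁿ`, which in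
turn has a duplicate in `{0,…,g(n, m)}ⁿ`, and duplication is transitive, so `f(n) ≤ g(n, m)`.
That `f(n)` exists at all is because `x` is determined up to duplication by the set of equations
it satisfies, and there are only finitely many such sets.
-/

instance {n : ℕ} : Finite (Eqn n) :=
  Finite.of_surjective
    (fun e : Fin n ⊕ (Fin n × Fin n × Fin n) ⊕ (Fin n × Fin n × Fin n) => match e with
      | .inl k => Eqn.one k
      | .inr (.inl (i, j, k)) => .add i j k
      | .inr (.inr (i, j, k)) => .mul i j k)
    (by
      rintro (k | ⟨i, j, k⟩ | ⟨i, j, k⟩)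
      exacts [⟨.inl k, rfl⟩, ⟨.inr (.inl (i, j, k)), rfl⟩, ⟨.inr (.inr (i, j, k)), rfl⟩])

namespace Dup

variable {n : ℕ}

theorem of_holds_imp {x y : Fin n → ℕ} (h : ∀ e : Eqn n, e.holds x → e.holds y) : Dup x y :=
  ⟨fun k => h (.one k), fun i j k => h (.add i j k), fun i j k => h (.mul i j k)⟩

theorem refl (x : Fin n → ℕ) : Dup x x :=
  of_holds_imp fun _ => id

theorem trans {x y z : Fin n → ℕ} (hxy : Dup x y) (hyz : Dup y z) : Dup x z :=
  ⟨fun k h => hyz.1 k (hxy.1 k h), fun i j k h => hyz.2.1 i j k (hxy.2.1 i j k h),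
    fun i j k h => hyz.2.2 i j k (hxy.2.2 i j k h)⟩

end Dup

def DupBoundBelow (n m b : ℕ) : Prop :=
  ∀ x : Fin n → ℕ, (∀ i, x i < m) → ∃ y, Dup x y ∧ ∀ i, y i ≤ b

theorem DupBound.dupBoundBelow {n b : ℕ} (h : DupBound n b) (m : ℕ) : DupBoundBelow n m b :=
  fun x _ => h x

theorem exists_dupBound (n : ℕ) : ∃ b, DupBound n b := by
  let eqns : (Fin n → ℕ) → Set (Eqn n) := fun x => {e | e.holds x}
  let rep : Set (Eqn n) → Fin n → ℕ := Function.invFun eqns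
  obtain ⟨b, hb⟩ := Finite.exists_le fun p : Set (Eqn n) × Fin n => rep p.1 p.2
  refine ⟨b, fun x => ⟨rep (eqns x), Dup.of_holds_imp fun e he => ?_, fun i => hb (eqns x, i)⟩⟩
  have hrep : eqns (rep (eqns x)) = eqns x := Function.invFun_eq ⟨x, rfl⟩
  exact hrep.symm.subset he

theorem dupBound_fdup (n : ℕ) : DupBound n (fdup n) :=
  Nat.sInf_mem (exists_dupBound n)

theorem one_le_fdup {n : ℕ} (hn : 0 < n) : 1 ≤ fdup n := by
  obtain ⟨y, hy, hyb⟩ := dupBound_fdup n fun _ => 1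
  have := hy.1 ⟨0, hn⟩ rfl
  have := hyb ⟨0, hn⟩
  omega

theorem dupBoundBelow_g {n m b : ℕ} (h : DupBound n b) : DupBoundBelow n m (g n m) :=
  Nat.sInf_mem (s := {b | DupBoundBelow n m b}) ⟨b, h.dupBoundBelow m⟩

theorem g_le_of_dupBound {n b : ℕ} (h : DupBound n b) (m : ℕ) : g n m ≤ b :=
  Nat.sInf_le (h.dupBoundBelow m)

theorem g_le_sub_one (n m : ℕ) : g n m ≤ m - 1 :=
  Nat.sInf_le fun x hx => ⟨x, Dup.refl x, fun i => Nat.le_sub_one_of_lt (hx i)⟩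

theorem dupBound_g {n m : ℕ} (hm : fdup n < m) : DupBound n (g n m) := by
  intro x
  obtain ⟨y, hxy, hyb⟩ := dupBound_fdup n x
  obtain ⟨z, hyz, hzb⟩ := dupBoundBelow_g (dupBound_fdup n) y fun i => (hyb i).trans_lt hm
  exact ⟨z, hxy.trans hyz, hzb⟩

theorem stmt10 (n : ℕ) (hn : 0 < n) :
    g n (fdup n) < fdup n ∧ ∀ m : ℕ, fdup n + 1 ≤ m → g n m = fdup n :=
  ⟨(g_le_sub_one n _).trans_lt (Nat.sub_one_lt_of_lt (one_le_fdup hn)),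
    fun _ hm => (g_le_of_dupBound (dupBound_fdup n) _).antisymm (Nat.sInf_le (dupBound_g hm))⟩
end

section
/- Assume that every computable function Γ : ℕ∖{0} → ℕ has a Diophantine graph expressible by equations from E_s: there exists s ≥ 3 and a conjunction Φ(x_1,…,x_s) of equations of the forms x_k = 1, x_i + x_j = x_k, x_i · x_j = x_k such that for all x_1, x_2 ∈ ℕ, (x_1,x_2) ∈ Γ ⟺ ∃ x_3,…,x_s ∈ ℕ, Φ(x_1,x_2,…,x_s). Then for each such Γ there exists a positive integer m such that Γ(n) < f(n) for all n ≥ m. -/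
/-!
Fix a system `Φ ⊆ E_a` defining the graph of `Γ`. For `n ≥ 2a + 2`, extend `Φ` by equations in
the remaining variables that count `1, 2, …, n - a - 1` along a chain `y_{j+1} = y_j + 1`, force
`x_1 = n` as the sum of two chain values, and introduce a new variable equal to `x_2 + 1`.
This system in `E_n` is solvable, and in every solution `x_2 = Γ(n)`, so a solution bounded by
`f(n)` shows `Γ(n) + 1 ≤ f(n)`.
-/

instance inst_s12 {n : ℕ} : Finite (Eqn n) := by
  have hinj : Function.Injective (fun e : Eqn n =>
      match e with
      | .one k => Sum.inl k
      | .add i j k => Sum.inr (Sum.inl (i, j, k))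
      | .mul i j k => Sum.inr (Sum.inr (i, j, k)) :
      Eqn n → Fin n ⊕ ((Fin n × Fin n × Fin n) ⊕ (Fin n × Fin n × Fin n))) := by
    intro e e' h
    cases e <;> cases e' <;> simp_all
  exact Finite.of_injective _ hinj

theorem isBound_f (n : ℕ) : IsBound n (f n) :=
  Nat.sInf_mem (exists_isBound n)

namespace Eqn

variable {a n : ℕ}

def map (σ : Fin a → Fin n) : Eqn a → Eqn n
  | .one k => .one (σ k)
  | .add i j k => .add (σ i) (σ j) (σ k)
  | .mul i j k => .mul (σ i) (σ j) (σ k)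

theorem holds_map (σ : Fin a → Fin n) (x : Fin n → ℕ) (e : Eqn a) :
    (e.map σ).holds x ↔ e.holds (x ∘ σ) := by
  cases e <;> rfl

end Eqn

section Systems

variable {a n : ℕ}

theorem solves_union {x : Fin n → ℕ} {S T : Set (Eqn n)} :
    Solves x (S ∪ T) ↔ Solves x S ∧ Solves x T := by
  simp only [Solves, Set.mem_union, or_imp, forall_and]

theorem solves_insert {x : Fin n → ℕ} {e : Eqn n} {S : Set (Eqn n)} :
    Solves x (insert e S) ↔ e.holds x ∧ Solves x S :=
  Set.forall_mem_insert

theorem solves_singleton {x : Fin n → ℕ} {e : Eqn n} : Solves x {e} ↔ e.holds x := by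
  simp only [Solves, Set.mem_singleton_iff, forall_eq]

theorem solves_image_map {x : Fin n → ℕ} {σ : Fin a → Fin n} {S : Set (Eqn a)} :
    Solves x (Eqn.map σ '' S) ↔ Solves (x ∘ σ) S := by
  simp only [Solves, Set.forall_mem_image, Eqn.holds_map]

def countingSystem (c : ℕ → Fin n) (k : ℕ) : Set (Eqn n) :=
  insert (.one (c 0)) ((fun j => .add (c j) (c 0) (c (j + 1))) '' Set.Iio k)

theorem solves_countingSystem {x : Fin n → ℕ} {c : ℕ → Fin n} {k : ℕ} :
    Solves x (countingSystem c k) ↔ ∀ j ≤ k, x (c j) = j + 1 := by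
  rw [countingSystem, solves_insert]
  simp only [Solves, Set.forall_mem_image, Set.mem_Iio]
  constructor
  · rintro ⟨h0, hstep⟩ j hj
    induction j with
    | zero => exact h0
    | succ j ih =>
      have hj' := @hstep j (by omega)
      simp only [Eqn.holds] at hj'
      rw [← hj', ih (by omega), h0]
  · intro h
    refine ⟨h 0 (Nat.zero_le k), fun j hj => ?_⟩
    simp only [Eqn.holds]
    rw [h j hj.le, h 0 (Nat.zero_le k), h (j + 1) hj]

/-- Layout: `ι i` for `i < a` carry `Φ`, `ι a` is the extra variable `ι 1 + 1`, and the chain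
`ι (a + 1 + j)` counts `j + 1` for `j ≤ k`. -/
def graphSystem (Φ : Set (Eqn a)) (ι : ℕ → Fin n) (k : ℕ) : Set (Eqn n) :=
  (Eqn.map (ι ∘ Fin.val) '' Φ ∪ countingSystem (fun j => ι (a + 1 + j)) k) ∪
    {.add (ι (a + 1 + k)) (ι (a + 1 + a)) (ι 0), .add (ι 1) (ι (a + 1)) (ι a)}

theorem solves_graphSystem {Φ : Set (Eqn a)} {ι : ℕ → Fin n} {k : ℕ} {y : Fin n → ℕ}
    (hak : a ≤ k) (hy : Solves y (graphSystem Φ ι k)) :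
    Solves (y ∘ ι ∘ Fin.val) Φ ∧ y (ι 0) = a + k + 2 ∧ y (ι a) = y (ι 1) + 1 := by
  simp only [graphSystem, solves_union, solves_insert, solves_singleton, solves_image_map,
    solves_countingSystem, Eqn.holds] at hy
  obtain ⟨⟨hΦ, hcount⟩, hsum, hsucc⟩ := hy
  rw [hcount k le_rfl, hcount a hak] at hsum
  rw [hcount 0 (Nat.zero_le k)] at hsucc
  exact ⟨hΦ, by omega, by omega⟩

theorem exists_solves_graphSystem {Φ : Set (Eqn a)} (ha : 2 ≤ a) {ι : ℕ → Fin n} {k : ℕ}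
    (hak : a ≤ k) (hι : ∀ i < a + k + 2, (ι i : ℕ) = i) {w : Fin a → ℕ}
    (hw0 : w ⟨0, by omega⟩ = a + k + 2) (hw : Solves w Φ) :
    ∃ x, Solves x (graphSystem Φ ι k) := by
  let X : ℕ → ℕ := fun i =>
    if h : i < a then w ⟨i, h⟩ else if i = a then w ⟨1, by omega⟩ + 1 else i - a
  have hX : ∀ i < a + k + 2, X (ι i) = X i := fun i hi => by rw [hι i hi]
  have hX_lt : ∀ i (h : i < a), X i = w ⟨i, h⟩ := fun i h => dif_pos h
  have hX_a : X a = w ⟨1, by omega⟩ + 1 := by simp [X]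
  have hX_gt : ∀ i, a < i → X i = i - a := fun i h => by
    simp [X, show ¬i < a by omega, show i ≠ a by omega]
  refine ⟨fun i => X i, ?_⟩
  simp only [graphSystem, solves_union, solves_insert, solves_singleton, solves_image_map,
    solves_countingSystem, Eqn.holds]
  refine ⟨⟨?_, fun j hj => ?_⟩, ?_, ?_⟩
  · convert hw using 1
    funext i
    simp only [Function.comp, hX i (by omega), hX_lt i i.isLt]
  · rw [hX _ (by omega), hX_gt _ (by omega)]
    omega
  · rw [hX _ (by omega), hX _ (by omega), hX 0 (by omega), hX_gt _ (by omega),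
      hX_gt _ (by omega), hX_lt 0 (by omega), hw0]
    omega
  · rw [hX 1 (by omega), hX (a + 1) (by omega), hX a (by omega), hX_lt 1 (by omega),
      hX_gt _ (by omega), hX_a]
    omega

end Systems

theorem exists_solves_lt_f {a : ℕ} (ha : 2 ≤ a) {Φ : Set (Eqn a)} {n : ℕ} (hn : 2 * a + 2 ≤ n)
    (h : ∃ w : Fin a → ℕ, w ⟨0, by omega⟩ = n ∧ Solves w Φ) :
    ∃ x : Fin a → ℕ, x ⟨0, by omega⟩ = n ∧ Solves x Φ ∧ x ⟨1, by omega⟩ < f n := by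
  obtain ⟨w, hw0, hw⟩ := h
  obtain ⟨k, rfl⟩ : ∃ k, n = a + k + 2 := ⟨n - a - 2, by omega⟩
  let ι : ℕ → Fin (a + k + 2) := Fin.ofNat _
  have hι : ∀ i < a + k + 2, (ι i : ℕ) = i := fun i hi => by
    rw [Fin.val_ofNat, Nat.mod_eq_of_lt hi]
  obtain ⟨y, hy, hyb⟩ :=
    isBound_f _ _ (exists_solves_graphSystem ha (by omega) hι hw0 hw)
  obtain ⟨hΦ, hy0, hya⟩ := solves_graphSystem (by omega) hy
  exact ⟨y ∘ ι ∘ Fin.val, hy0, hΦ, Nat.lt_of_succ_le (hya ▸ hyb (ι a) :)⟩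

theorem stmt12 (Γ : ℕ → ℕ)
    (hΓ : ∃ s : ℕ, ∃ Φ : Set (Eqn (s + 3)), ∀ x1 x2 : ℕ, 0 < x1 →
      (Γ x1 = x2 ↔ ∃ x : Fin (s + 3) → ℕ,
        x ⟨0, by omega⟩ = x1 ∧ x ⟨1, by omega⟩ = x2 ∧ Solves x Φ)) :
    ∃ m : ℕ, 0 < m ∧ ∀ n : ℕ, m ≤ n → Γ n < f n := by
  obtain ⟨s, Φ, hΦ⟩ := hΓ
  refine ⟨2 * (s + 3) + 2, by omega, fun n hn => ?_⟩
  have hn0 : 0 < n := by omega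
  obtain ⟨w, hw0, -, hw⟩ := (hΦ n (Γ n) hn0).mp rfl
  obtain ⟨x, hx0, hx, hx1⟩ := exists_solves_lt_f (by omega) hn ⟨w, hw0, hw⟩
  rwa [(hΦ n _ hn0).mpr ⟨x, hx0, rfl, hx⟩]
end
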